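/- The authentication goal of the simple example (Blanchet) protocol is false: there exists a bundle Υ = (Θ,→) that is a run of the protocol, together with messages a,b of sort A, s of sort S, d of sort D, and a strand z ∈ Dom(Θ) such that htin(Θ,z,2,resp(a,b,s,d)), non(Θ,a⁻¹), and non(Θ,b⁻¹) all hold, yet there are no a₀ of sort A, s₀ of sort S, d₀ of sort D, and z₀ ∈ Dom(Θ) with htin(Θ,z₀,1,init(a₀,b,s₀,d₀)). -/

import Mathlib

/-- The four sorts of the Simple Crypto Algebra signature. -/
inductive MSort : Type
  | top | A | S | D
deriving DecidableEq

/-- Message terms over a set `V` of variables (the free order-sorted algebra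
in canonical form; ground messages are `MTerm Empty`). -/
inductive MTerm (V : Type) : Type
  | var (v : V)
  | akey (i : ℕ) (b : Bool)   -- asymmetric key constants: `a_i` when `b = false`, `b_i` when `b = true`
  | skey (i : ℕ)              -- symmetric key constants `s_i`
  | data (i : ℕ)              -- data constants
  | invk (t : MTerm V)        -- key inverse (kept only where it cannot be reduced)
  | pair (t₀ t₁ : MTerm V)
  | enc (t k : MTerm V)

namespace MTerm

/-- The sort of a term (`none` when ill-sorted), given variable sorts `so`. -/
def srt {V : Type} (so : V → MSort) : MTerm V → Option MSort
  | var v => some (so v)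
  | akey _ _ => some .A
  | skey _ => some .S
  | data _ => some .D
  | invk t => match t.srt so with
      | some .A => some .A
      | some .S => some .S
      | _ => none
  | pair t₀ t₁ => match t₀.srt so, t₁.srt so with
      | some _, some _ => some .top
      | _, _ => none
  | enc t k => match t.srt so, k.srt so with
      | some _, some .A => some .top
      | some _, some .S => some .top
      | _, _ => none

/-- The key-inverse operation on canonical terms. -/
def invOp {V : Type} (so : V → MSort) : MTerm V → MTerm V
  | var v => if so v = .S then var v else invk (var v)
  | akey i b => akey i (!b)
  | skey i => skey i
  | invk t => t
  | t => invk t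

/-- Apply a substitution (an algebra homomorphism determined by its action on
variables), normalizing inverses; `so'` gives the sorts of target variables. -/
def subst {V W : Type} (so' : W → MSort) (σ : V → MTerm W) : MTerm V → MTerm W
  | var v => σ v
  | akey i b => akey i b
  | skey i => skey i
  | data i => data i
  | invk t => invOp so' (t.subst so' σ)
  | pair t₀ t₁ => pair (t₀.subst so' σ) (t₁.subst so' σ)
  | enc t k => enc (t.subst so' σ) (k.subst so' σ)

end MTerm

/-- Subsort relation: every sort is ≤ itself and ≤ ⊤. -/
def SLe (s₁ s₂ : MSort) : Prop := s₁ = s₂ ∨ s₂ = .top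

/-- `t` is a message of sort `s` (up to subsorting). -/
def HasSort {V : Type} (so : V → MSort) (t : MTerm V) (s : MSort) : Prop :=
  ∃ s', t.srt so = some s' ∧ SLe s' s

def WellSorted {V : Type} (so : V → MSort) (t : MTerm V) : Prop :=
  (t.srt so).isSome = true

/-- Atoms are the messages of sort A, S or D. -/
def IsAtomM {V : Type} (so : V → MSort) (t : MTerm V) : Prop :=
  t.srt so = some .A ∨ t.srt so = some .S ∨ t.srt so = some .D

/-- Sorting of ground (variable-free) terms. -/
def gSo : Empty → MSort := fun e => nomatch e

/-- Ground messages: the initial algebra. -/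
abbrev Msg := MTerm Empty

/-- The carried-by relation `t₀ ⊑ t₁`. -/
inductive Carries {V : Type} : MTerm V → MTerm V → Prop
  | refl (t) : Carries t t
  | pairL {t t₀ t₁} : Carries t t₀ → Carries t (.pair t₀ t₁)
  | pairR {t t₀ t₁} : Carries t t₁ → Carries t (.pair t₀ t₁)
  | encP {t t₀ k} : Carries t t₀ → Carries t (.enc t₀ k)
/-- Events: transmission `+t` or reception `−t`. -/
inductive EvtT (V : Type) : Type
  | send (t : MTerm V)
  | recv (t : MTerm V)

namespace EvtT

def msg {V : Type} : EvtT V → MTerm V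
  | send t => t
  | recv t => t

def IsSend {V : Type} : EvtT V → Prop
  | send _ => True
  | recv _ => False

def IsRecv {V : Type} : EvtT V → Prop
  | send _ => False
  | recv _ => True

def subst {V W : Type} (so' : W → MSort) (σ : V → MTerm W) : EvtT V → EvtT W
  | send t => send (t.subst so' σ)
  | recv t => recv (t.subst so' σ)

end EvtT

/-- A default event (used only for out-of-range indexing). -/
def dEvt {V : Type} : EvtT V := .send (.data 0)

/-- A strand space: a finite non-empty sequence of traces (finite non-empty
sequences of events); strands are indices into the sequence. -/
structure SSpaceT (V : Type) where
  tr : List (List (EvtT V))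
  nonnil : tr ≠ []
  ne : ∀ C ∈ tr, C ≠ []

namespace SSpaceT

variable {V : Type}

/-- The trace of strand `s`. -/
def trace (Θ : SSpaceT V) (s : ℕ) : List (EvtT V) := Θ.tr.getD s []

/-- `s` is a strand of `Θ`, i.e. a member of `Dom(Θ)`. -/
def IsStrand (Θ : SSpaceT V) (s : ℕ) : Prop := s < Θ.tr.length

/-- `n = (s, i)` is a node of `Θ`. -/
def IsNode (Θ : SSpaceT V) (n : ℕ × ℕ) : Prop :=
  n.1 < Θ.tr.length ∧ n.2 < (Θ.trace n.1).length

/-- The event at node `n`. -/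
def evt (Θ : SSpaceT V) (n : ℕ × ℕ) : EvtT V := (Θ.trace n.1).getD n.2 dEvt

end SSpaceT

/-- `t` originates in trace `C` at index `i`. -/
def OrigAt {V : Type} (C : List (EvtT V)) (t : MTerm V) (i : ℕ) : Prop :=
  i < C.length ∧ (C.getD i dEvt).IsSend ∧ Carries t (C.getD i dEvt).msg ∧
    ∀ j < i, ¬ Carries t (C.getD j dEvt).msg

/-- `t` is non-originating in `Θ`. -/
def SSpaceT.Non {V : Type} (Θ : SSpaceT V) (t : MTerm V) : Prop :=
  ∀ s, Θ.IsStrand s → ∀ i, ¬ OrigAt (Θ.trace s) t i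

/-- `t` uniquely originates in `Θ` at node `n`. -/
def SSpaceT.Uniq {V : Type} (Θ : SSpaceT V) (t : MTerm V) (n : ℕ × ℕ) : Prop :=
  Θ.IsStrand n.1 ∧ OrigAt (Θ.trace n.1) t n.2 ∧
    ∀ s i, Θ.IsStrand s → OrigAt (Θ.trace s) t i → s = n.1 ∧ i = n.2

/-- Strand succession edges `(s, i) ⇒ (s, i+1)`. -/
def SuccEdge {V : Type} (Θ : SSpaceT V) (n₀ n₁ : ℕ × ℕ) : Prop :=
  n₀.1 = n₁.1 ∧ n₁.2 = n₀.2 + 1 ∧ Θ.IsNode n₁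

/-- A bundle: a ground strand space together with communication edges forming,
with the strand-succession edges, a finite directed acyclic graph in which
every reception has a unique matching transmission. -/
structure Bundle where
  Θ : SSpaceT Empty
  comm : (ℕ × ℕ) → (ℕ × ℕ) → Prop
  comm_nodes : ∀ n₀ n₁, comm n₀ n₁ → Θ.IsNode n₀ ∧ Θ.IsNode n₁
  comm_evt : ∀ n₀ n₁, comm n₀ n₁ → ∃ t, Θ.evt n₀ = .send t ∧ Θ.evt n₁ = .recv t
  comm_uniq : ∀ n₁, Θ.IsNode n₁ → (Θ.evt n₁).IsRecv → ∃! n₀, comm n₀ n₁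
  acyclic : ∀ n, ¬ Relation.TransGen (fun m₀ m₁ => SuccEdge Θ m₀ m₁ ∨ comm m₀ m₁) n n

/-- The edge relation of a bundle. -/
def Bundle.edge (Υ : Bundle) (n₀ n₁ : ℕ × ℕ) : Prop :=
  SuccEdge Υ.Θ n₀ n₁ ∨ Υ.comm n₀ n₁

/-- The precedes relation `≺` of a bundle: the transitive closure of the edges. -/
def Bundle.prec (Υ : Bundle) : (ℕ × ℕ) → (ℕ × ℕ) → Prop :=
  Relation.TransGen Υ.edge
/-- A role item `r(C, N, U)`: a trace together with non-origination and
unique-origination assumption sequences of the same length. -/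
structure RoleItemT (V : Type) where
  C : List (EvtT V)
  N : List (Set (MTerm V))
  U : List (Set (MTerm V))
  ne : C ≠ []
  lenN : N.length = C.length
  lenU : U.length = C.length

/-- Apply a substitution to a role item. -/
def RoleItemT.subst {V W : Type} (so' : W → MSort) (σ : V → MTerm W)
    (r : RoleItemT V) : RoleItemT W where
  C := r.C.map (EvtT.subst so' σ)
  N := r.N.map (fun X => (MTerm.subst so' σ) '' X)
  U := r.U.map (fun X => (MTerm.subst so' σ) '' X)
  ne := by
    intro h
    have hl : r.C.length = 0 := by simpa using congrArg List.length h
    exact r.ne (List.length_eq_zero_iff.mp hl)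
  lenN := by simpa using r.lenN
  lenU := by simpa using r.lenU

/-- Strand `s` is an instance of role item `r` in `Θ`. -/
def InstOf {V : Type} (Θ : SSpaceT V) (s : ℕ) (r : RoleItemT V) : Prop :=
  Θ.IsStrand s ∧
  (Θ.trace s).length ≤ r.C.length ∧
  r.C.take (Θ.trace s).length = Θ.trace s ∧
  (∀ i < (Θ.trace s).length, ∀ t ∈ r.N.getD i ∅, Θ.Non t) ∧
  (∀ i < (Θ.trace s).length, ∀ t ∈ r.U.getD i ∅, Θ.Uniq t (s, i))

/-- `htin(Θ, z, h, r)`: strand `z` has height at least `h` and instantiates `r`. -/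
def Htin {V : Type} (Θ : SSpaceT V) (z h : ℕ) (r : RoleItemT V) : Prop :=
  h ≤ (Θ.trace z).length ∧ InstOf Θ z r

/-- A bundle is a run of the protocol `P` (a set of roles, i.e. of sets of
ground role items) when some role assignment makes each strand an instance of
a role item of its assigned role. -/
def RunOf (Υ : Bundle) (P : Set (Set (RoleItemT Empty))) : Prop :=
  ∃ rl : ℕ → Set (RoleItemT Empty),
    ∀ s, Υ.Θ.IsStrand s → rl s ∈ P ∧ ∃ r ∈ rl s, InstOf Υ.Θ s r
/-- Ground messages of sort A (asymmetric keys). -/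
def SortA (t : Msg) : Prop := t.srt gSo = some .A
/-- Ground messages of sort S (symmetric keys). -/
def SortS (t : Msg) : Prop := t.srt gSo = some .S
/-- Ground messages of sort D (data). -/
def SortD (t : Msg) : Prop := t.srt gSo = some .D

/-- Key inverse on ground messages. -/
def minv (t : Msg) : Msg := MTerm.invOp gSo t

/-- Adversary role item: create an atom out of thin air. -/
def createItem (t : Msg) : RoleItemT Empty where
  C := [.send t]
  N := [∅]
  U := [∅]
  ne := by simp
  lenN := rfl
  lenU := rfl

/-- Adversary role item: pairing. -/
def pairItem (t₀ t₁ : Msg) : RoleItemT Empty where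
  C := [.recv t₀, .recv t₁, .send (.pair t₀ t₁)]
  N := [∅, ∅, ∅]
  U := [∅, ∅, ∅]
  ne := by simp
  lenN := rfl
  lenU := rfl

/-- Adversary role item: separation. -/
def sepItem (t₀ t₁ : Msg) : RoleItemT Empty where
  C := [.recv (.pair t₀ t₁), .send t₀, .send t₁]
  N := [∅, ∅, ∅]
  U := [∅, ∅, ∅]
  ne := by simp
  lenN := rfl
  lenU := rfl

/-- Adversary role item: encryption. -/
def encItem (t k : Msg) : RoleItemT Empty where
  C := [.recv t, .recv k, .send (.enc t k)]
  N := [∅, ∅, ∅]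
  U := [∅, ∅, ∅]
  ne := by simp
  lenN := rfl
  lenU := rfl

/-- Adversary role item: decryption. -/
def decItem (t k : Msg) : RoleItemT Empty where
  C := [.recv (.enc t k), .recv (minv k), .send t]
  N := [∅, ∅, ∅]
  U := [∅, ∅, ∅]
  ne := by simp
  lenN := rfl
  lenU := rfl

def createRole : Set (RoleItemT Empty) :=
  { r | ∃ t : Msg, IsAtomM gSo t ∧ r = createItem t }
def pairRole : Set (RoleItemT Empty) :=
  { r | ∃ t₀ t₁ : Msg, WellSorted gSo t₀ ∧ WellSorted gSo t₁ ∧ r = pairItem t₀ t₁ }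
def sepRole : Set (RoleItemT Empty) :=
  { r | ∃ t₀ t₁ : Msg, WellSorted gSo t₀ ∧ WellSorted gSo t₁ ∧ r = sepItem t₀ t₁ }
def encRole : Set (RoleItemT Empty) :=
  { r | ∃ t k : Msg, WellSorted gSo t ∧ (SortA k ∨ SortS k) ∧ r = encItem t k }
def decRole : Set (RoleItemT Empty) :=
  { r | ∃ t k : Msg, WellSorted gSo t ∧ (SortA k ∨ SortS k) ∧ r = decItem t k }

/-- Initiator role item of the simple (Blanchet) example protocol:
`⟨+{{s}_{a⁻¹}}_b, −{d}_s⟩`, with `s` assumed uniquely originating at the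
first event. -/
def initItem (a b s d : Msg) : RoleItemT Empty where
  C := [.send (.enc (.enc s (minv a)) b), .recv (.enc d s)]
  N := [∅, ∅]
  U := [{s}, ∅]
  ne := by simp
  lenN := rfl
  lenU := rfl

/-- Responder role item of the simple (Blanchet) example protocol:
`⟨−{{s}_{a⁻¹}}_b, +{d}_s⟩`. -/
def respItem (a b s d : Msg) : RoleItemT Empty where
  C := [.recv (.enc (.enc s (minv a)) b), .send (.enc d s)]
  N := [∅, ∅]
  U := [∅, ∅]
  ne := by simp
  lenN := rfl
  lenU := rfl

def initRole : Set (RoleItemT Empty) :=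
  { r | ∃ a b s d : Msg, SortA a ∧ SortA b ∧ SortS s ∧ SortD d ∧ r = initItem a b s d }
def respRole : Set (RoleItemT Empty) :=
  { r | ∃ a b s d : Msg, SortA a ∧ SortA b ∧ SortS s ∧ SortD d ∧ r = respItem a b s d }

/-- The simple (Blanchet) example protocol, including the adversary roles. -/
def blanchetProt : Set (Set (RoleItemT Empty)) :=
  {initRole, respRole, createRole, pairRole, sepRole, encRole, decRole}


/-!
The initiator `a` runs the protocol with a compromised principal `e`, sending `{{s}_{a⁻¹}}_e`.
The adversary creates `e⁻¹`, strips the outer encryption, and re-encrypts the signed key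
`{s}_{a⁻¹}` for `b`; the responder `b` accepts it and its answer `{d}_s` completes `a`'s strand.
The keys `a⁻¹` and `b⁻¹` only ever occur in key position, so they are carried by no message and
originate nowhere. Yet no strand of the run begins by sending a message encrypted for `b`,
which every initiator strand addressing `b` would have to do.
-/

deriving instance DecidableEq for MTerm
deriving instance DecidableEq for EvtT

namespace MTerm

variable {V : Type}

def carried : MTerm V → List (MTerm V)
  | pair t₀ t₁ => pair t₀ t₁ :: (carried t₀ ++ carried t₁)
  | enc t k => enc t k :: carried t
  | u => [u]

theorem carries_iff_mem_carried {t u : MTerm V} : Carries t u ↔ t ∈ u.carried := by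
  constructor
  · intro h
    induction h with
    | refl => cases t <;> simp [carried]
    | pairL _ ih => simp [carried, ih]
    | pairR _ ih => simp [carried, ih]
    | encP _ ih => simp [carried, ih]
  · intro h
    induction u with
    | pair t₀ t₁ ih₀ ih₁ =>
      simp only [carried, List.mem_cons, List.mem_append] at h
      rcases h with rfl | h | h
      exacts [.refl _, .pairL (ih₀ h), .pairR (ih₁ h)]
    | enc t₀ k ih₀ _ =>
      simp only [carried, List.mem_cons] at h
      rcases h with rfl | h
      exacts [.refl _, .encP (ih₀ h)]
    | _ => simp only [carried, List.mem_singleton] at h; exact h ▸ .refl _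

end MTerm

instance {V : Type} [DecidableEq V] (t u : MTerm V) : Decidable (Carries t u) :=
  decidable_of_iff _ MTerm.carries_iff_mem_carried.symm

instance {V : Type} (e : EvtT V) : Decidable e.IsSend := by
  cases e <;> unfold EvtT.IsSend <;> infer_instance

instance {V : Type} (e : EvtT V) : Decidable e.IsRecv := by
  cases e <;> unfold EvtT.IsRecv <;> infer_instance

instance {V : Type} [DecidableEq V] (C : List (EvtT V)) (t : MTerm V) (i : ℕ) :
    Decidable (OrigAt C t i) := by
  unfold OrigAt; infer_instance

namespace SSpaceT

variable {V : Type} (Θ : SSpaceT V)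

instance (s : ℕ) : Decidable (Θ.IsStrand s) := inferInstanceAs (Decidable (s < _))

instance (n : ℕ × ℕ) : Decidable (Θ.IsNode n) := inferInstanceAs (Decidable (_ ∧ _))

instance (P : ℕ × ℕ → Prop) [DecidablePred P] : Decidable (∀ n, Θ.IsNode n → P n) :=
  decidable_of_iff (∀ s < Θ.tr.length, ∀ i < (Θ.trace s).length, P (s, i))
    ⟨fun h n hn => h n.1 hn.1 n.2 hn.2, fun h s hs i hi => h (s, i) ⟨hs, hi⟩⟩

theorem non_iff {t : MTerm V} :
    Θ.Non t ↔ ∀ s < Θ.tr.length, ∀ i < (Θ.trace s).length, ¬ OrigAt (Θ.trace s) t i :=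
  ⟨fun h s hs i _ => h s hs i, fun h s hs i hi => h s hs i hi.1 hi⟩

instance [DecidableEq V] (t : MTerm V) : Decidable (Θ.Non t) :=
  decidable_of_iff _ Θ.non_iff.symm

theorem uniq_iff {t : MTerm V} {n : ℕ × ℕ} :
    Θ.Uniq t n ↔ Θ.IsStrand n.1 ∧ OrigAt (Θ.trace n.1) t n.2 ∧
      ∀ s < Θ.tr.length, ∀ i < (Θ.trace s).length,
        OrigAt (Θ.trace s) t i → s = n.1 ∧ i = n.2 :=
  and_congr_right' <| and_congr_right'
    ⟨fun h s hs i _ => h s i hs, fun h s i hs hi => h s hs i hi.1 hi⟩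

instance [DecidableEq V] (t : MTerm V) (n : ℕ × ℕ) : Decidable (Θ.Uniq t n) :=
  decidable_of_iff _ Θ.uniq_iff.symm

def ofItems (rs : List (RoleItemT V)) (h : rs ≠ []) : SSpaceT V where
  tr := rs.map RoleItemT.C
  nonnil := by simpa using h
  ne := by simpa using fun r _ => r.ne

theorem trace_ofItems {rs : List (RoleItemT V)} {h : rs ≠ []} {s : ℕ} (hs : s < rs.length) :
    (ofItems rs h).trace s = rs[s].C := by
  simp [trace, ofItems, List.getD_eq_getElem?_getD, hs]

end SSpaceT

theorem List.getD_eq_empty_of_forall {α : Type*} {L : List (Set α)} (hL : ∀ X ∈ L, X = ∅)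
    (i : ℕ) : L.getD i ∅ = ∅ := by
  rw [List.getD_eq_getElem?_getD]
  cases h : L[i]? with
  | none => rfl
  | some X => exact hL X (List.mem_of_getElem? h)

section InstOf

variable {V : Type} {Θ : SSpaceT V} {s : ℕ} {r : RoleItemT V}

theorem InstOf.trace_prefix (h : InstOf Θ s r) : Θ.trace s <+: r.C :=
  List.prefix_iff_eq_take.2 h.2.2.1.symm

theorem instOf_of_prefix (hs : Θ.IsStrand s) (hpre : Θ.trace s <+: r.C)
    (hN : ∀ X ∈ r.N, X = ∅) (hU : ∀ i, ∀ t ∈ r.U.getD i ∅, Θ.Uniq t (s, i)) :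
    InstOf Θ s r := by
  refine ⟨hs, hpre.length_le, (List.prefix_iff_eq_take.1 hpre).symm, ?_, fun i _ => hU i⟩
  intro i _ t ht
  rw [List.getD_eq_empty_of_forall hN] at ht
  exact ht.elim

theorem Htin.head?_trace {k : ℕ} (h : Htin Θ s k r) (hk : 0 < k) :
    (Θ.trace s).head? = r.C.head? := by
  have hlen := h.1
  rw [List.prefix_iff_eq_take.1 h.2.trace_prefix, List.head?_take, if_neg (by omega)]

end InstOf

theorem runOf_iff {Υ : Bundle} {P : Set (Set (RoleItemT Empty))} :
    RunOf Υ P ↔ ∀ s, Υ.Θ.IsStrand s → ∃ R ∈ P, ∃ r ∈ R, InstOf Υ.Θ s r := by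
  refine ⟨fun ⟨rl, h⟩ s hs => ⟨rl s, h s hs⟩, fun h => ?_⟩
  choose! rl hrl using h
  exact ⟨rl, hrl⟩

theorem Relation.not_transGen_self_of_lt {α : Type*} {r : α → α → Prop} (f : α → ℕ)
    (hf : ∀ a b, r a b → f a < f b) (a : α) : ¬ Relation.TransGen r a a := fun h => by
  have := Relation.TransGen.lift (p := (· < ·)) f hf a a h
  rw [Function.onFun, Relation.transGen_eq_self] at this
  exact lt_irrefl _ this

def Bundle.ofSource (Θ : SSpaceT Empty) (src : ℕ × ℕ → ℕ × ℕ) (rank : ℕ × ℕ → ℕ)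
    (hsrc : ∀ n, Θ.IsNode n → (Θ.evt n).IsRecv →
      Θ.IsNode (src n) ∧ Θ.evt (src n) = .send (Θ.evt n).msg ∧ rank (src n) < rank n)
    (hsucc : ∀ n, Θ.IsNode n → 0 < n.2 → rank (n.1, n.2 - 1) < rank n) : Bundle where
  Θ := Θ
  comm n₀ n₁ := Θ.IsNode n₁ ∧ (Θ.evt n₁).IsRecv ∧ n₀ = src n₁
  comm_nodes := by
    rintro _ n ⟨hn, hr, rfl⟩
    exact ⟨(hsrc n hn hr).1, hn⟩
  comm_evt := by
    rintro _ n ⟨hn, hr, rfl⟩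
    refine ⟨_, (hsrc n hn hr).2.1, ?_⟩
    cases h : Θ.evt n <;> simp_all [EvtT.IsRecv, EvtT.msg]
  comm_uniq n hn hr := ⟨src n, ⟨hn, hr, rfl⟩, fun _ h => h.2.2⟩
  acyclic := by
    refine Relation.not_transGen_self_of_lt rank ?_
    rintro ⟨s₀, i₀⟩ n (⟨rfl, hi, hn⟩ | ⟨hn, hr, hsrc_eq⟩)
    · simpa [hi] using hsucc n hn (by omega)
    · exact hsrc_eq ▸ (hsrc n hn hr).2.2

namespace BlanchetAttack

def a : Msg := .akey 0 false
def b : Msg := .akey 1 false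
/-- The public key of the compromised principal whom `a` addresses. -/
def e : Msg := .akey 2 false
def s : Msg := .skey 0
def d : Msg := .data 0

def sig : Msg := .enc s (minv a)

def items : List (RoleItemT Empty) :=
  [initItem a e s d, createItem (minv e), decItem sig e, encItem sig b, createItem b,
    respItem a b s d]

def space : SSpaceT Empty := SSpaceT.ofItems items (by simp [items])

/-- The order in which the attack is executed. -/
def schedule : List (ℕ × ℕ) :=
  [(0, 0), (1, 0), (2, 0), (2, 1), (2, 2), (4, 0), (3, 0), (3, 1), (3, 2), (5, 0), (5, 1),
    (0, 1)]

def src : ℕ × ℕ → ℕ × ℕ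
  | (2, 0) => (0, 0)
  | (2, 1) => (1, 0)
  | (3, 0) => (2, 2)
  | (3, 1) => (4, 0)
  | (5, 0) => (3, 2)
  | (0, 1) => (5, 1)
  | n => n

def bundle : Bundle :=
  .ofSource space src schedule.idxOf (by decide) (by decide)

theorem instOf (z : ℕ) (hz : z < 6) :
    InstOf bundle.Θ z (items[z]'hz) := by
  have htr : space.trace z = (items[z]'hz).C := SSpaceT.trace_ofItems hz
  refine instOf_of_prefix hz (htr ▸ List.prefix_refl _) ?_ fun i t ht => ?_
  · interval_cases z <;> simp [items, initItem, createItem, decItem, encItem, respItem]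
  · interval_cases z <;> rcases i with _ | _ | _ | i <;>
      simp [items, initItem, createItem, decItem, encItem, respItem] at ht
    subst ht
    decide

theorem runOf : RunOf bundle blanchetProt := by
  refine runOf_iff.2 fun z (hz : z < 6) => ?_
  interval_cases z
  · exact ⟨initRole, by simp [blanchetProt], _, ⟨a, e, s, d, rfl, rfl, rfl, rfl, rfl⟩,
      instOf 0 hz⟩
  · exact ⟨createRole, by simp [blanchetProt], _, ⟨minv e, Or.inl rfl, rfl⟩, instOf 1 hz⟩
  · exact ⟨decRole, by simp [blanchetProt], _, ⟨sig, e, rfl, Or.inl rfl, rfl⟩, instOf 2 hz⟩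
  · exact ⟨encRole, by simp [blanchetProt], _, ⟨sig, b, rfl, Or.inl rfl, rfl⟩, instOf 3 hz⟩
  · exact ⟨createRole, by simp [blanchetProt], _, ⟨b, Or.inl rfl, rfl⟩, instOf 4 hz⟩
  · exact ⟨respRole, by simp [blanchetProt], _, ⟨a, b, s, d, rfl, rfl, rfl, rfl, rfl⟩,
      instOf 5 hz⟩

theorem trace_head?_ne_send_enc_b (z : ℕ) (t : Msg) :
    (bundle.Θ.trace z).head? ≠ some (.send (.enc t b)) := by
  rcases z with _ | _ | _ | _ | _ | _ | z <;>
    simp [bundle, Bundle.ofSource, space, SSpaceT.trace, SSpaceT.ofItems, items, initItem,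
      createItem, decItem, encItem, respItem, b, e, minv, MTerm.invOp]

end BlanchetAttack

/-- The authentication goal of the simple (Blanchet) example protocol is
false: there is a run of the protocol containing a full-length responder
strand with `a⁻¹` and `b⁻¹` non-originating, but no initiator strand of
height 1 that used the key `b` for its outer encryption. -/
theorem blanchet_authentication_fails :
    ∃ (Υ : Bundle) (a b s d : Msg) (z : ℕ),
      RunOf Υ blanchetProt ∧
      SortA a ∧ SortA b ∧ SortS s ∧ SortD d ∧
      Υ.Θ.IsStrand z ∧
      Htin Υ.Θ z 2 (respItem a b s d) ∧
      Υ.Θ.Non (minv a) ∧ Υ.Θ.Non (minv b) ∧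
      ¬ ∃ (a₀ s₀ d₀ : Msg) (z₀ : ℕ),
          SortA a₀ ∧ SortS s₀ ∧ SortD d₀ ∧ Υ.Θ.IsStrand z₀ ∧
          Htin Υ.Θ z₀ 1 (initItem a₀ b s₀ d₀) := by
  open BlanchetAttack in
  refine ⟨bundle, a, b, s, d, 5, runOf, rfl, rfl, rfl, rfl, by decide,
    ⟨by decide, instOf 5 (by decide)⟩, by decide, by decide, ?_⟩
  rintro ⟨a₀, s₀, d₀, z₀, -, -, -, -, hinit⟩
  exact trace_head?_ne_send_enc_b z₀ _ (hinit.head?_trace one_pos)
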